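/- Let S: ℝ^d → M be a map from inputs to partition averaging matrices, such that ‖A_{S(x)} − A_{S(x')}‖₂ ≤ ρ ‖x − x'‖₂ for all x, x' (where ‖·‖₂ on matrices is the L₂ operator norm), and such that each A_{S(x)} satisfies A² = A and ‖A_{S(x)}‖₂ ≤ 1. Define h(x) = A_{S(x)} x. Then for all x, δ ∈ ℝ^d, ‖h(x + δ) − h(x + A_{S(x)} δ)‖₂ ≤ 2ρ‖δ‖₂² + ρ‖δ‖₂‖x‖₂. -/

import Mathlib

open Matrix

/-- The `L₂` operator norm of a square real matrix, acting on Euclidean space. -/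
noncomputable def l2OpNorm {d : ℕ} (A : Matrix (Fin d) (Fin d) ℝ) : ℝ :=
  ‖(Matrix.toEuclideanCLM (𝕜 := ℝ) A : EuclideanSpace ℝ (Fin d) →L[ℝ] EuclideanSpace ℝ (Fin d))‖

/-- The Euclidean (`L₂`) norm of a vector in `ℝ^d`. -/
noncomputable def l2Norm {d : ℕ} (v : Fin d → ℝ) : ℝ :=
  ‖(WithLp.equiv 2 (Fin d → ℝ)).symm v‖

/-- A contractive idempotent on a real inner product space satisfies `‖v - P v‖ ≤ ‖v‖`. -/
lemma norm_sub_apply_le_of_idempotent {E : Type*} [NormedAddCommGroup E]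
    [InnerProductSpace ℝ E] (P : E →L[ℝ] E) (hP : ∀ v, P (P v) = P v)
    (h1 : ‖P‖ ≤ 1) (v : E) : ‖v - P v‖ ≤ ‖v‖ := by
  set w := v - P v with hw
  set u := P v with hu
  have hPw : P w = 0 := by rw [hw, map_sub, hP]; simp [hu]
  have horth : inner (𝕜 := ℝ) w u = 0 := by
    have key : ∀ t : ℝ, 0 ≤ ‖w‖ ^ 2 + 2 * t * inner (𝕜 := ℝ) w u := by
      intro t
      have h1' : ‖P (w + t • u)‖ ≤ ‖w + t • u‖ := by
        refine le_trans (P.le_opNorm _) ?_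
        nlinarith [norm_nonneg (w + t • u)]
      have h2' : P (w + t • u) = t • u := by
        rw [map_add, hPw, zero_add, _root_.map_smul, hu, hP]
      rw [h2'] at h1'
      have h4' : ‖t • u‖ ^ 2 ≤ ‖w + t • u‖ ^ 2 := by
        apply sq_le_sq' _ h1'
        linarith [norm_nonneg (t • u), norm_nonneg (w + t • u)]
      have h5' : ‖w + t • u‖ ^ 2 = ‖w‖ ^ 2 + 2 * (t * inner (𝕜 := ℝ) w u) + ‖t • u‖ ^ 2 := by
        rw [norm_add_sq_real, real_inner_smul_right]
      nlinarith
    by_contra hne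
    have hcancel : 2 * (-(‖w‖ ^ 2 + 1) / (2 * inner (𝕜 := ℝ) w u)) * inner (𝕜 := ℝ) w u
        = -(‖w‖ ^ 2 + 1) := by
      field_simp
    have := key (-(‖w‖ ^ 2 + 1) / (2 * inner (𝕜 := ℝ) w u))
    rw [hcancel] at this
    linarith [sq_nonneg ‖w‖]
  have hsum : ‖v‖ ^ 2 = ‖w‖ ^ 2 + ‖u‖ ^ 2 := by
    have hv : v = w + u := by rw [hw, hu]; abel
    rw [hv, norm_add_sq_real, horth]
    ring
  nlinarith [norm_nonneg v, norm_nonneg w, sq_nonneg ‖u‖]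

theorem dynamic_partition_smoothing_bound {d : ℕ} (ρ : ℝ)
    (A : (Fin d → ℝ) → Matrix (Fin d) (Fin d) ℝ)
    (hidem : ∀ x, A x * A x = A x)
    (hnorm : ∀ x, l2OpNorm (A x) ≤ 1)
    (hlip : ∀ x x', l2OpNorm (A x - A x') ≤ ρ * l2Norm (x - x'))
    (h : (Fin d → ℝ) → (Fin d → ℝ))
    (hh : ∀ x, h x = (A x).mulVec x) :
    ∀ x δ : Fin d → ℝ,
      l2Norm (h (x + δ) - h (x + (A x).mulVec δ))
        ≤ 2 * ρ * l2Norm δ ^ 2 + ρ * l2Norm δ * l2Norm x := by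
  intro x δ
  by_cases hδ0 : δ = 0
  · subst hδ0
    have hv : h (x + 0) - h (x + (A x).mulVec 0) = 0 := by
      simp [Matrix.mulVec_zero]
    rw [hv]
    have h0 : l2Norm (0 : Fin d → ℝ) = 0 := by simp [l2Norm]
    rw [h0]
    ring_nf
    simp
  have he_sub : ∀ v w : Fin d → ℝ,
      (WithLp.equiv 2 (Fin d → ℝ)).symm (v - w)
        = (WithLp.equiv 2 (Fin d → ℝ)).symm v - (WithLp.equiv 2 (Fin d → ℝ)).symm w :=
    fun v w => rfl
  have he_add : ∀ v w : Fin d → ℝ,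
      (WithLp.equiv 2 (Fin d → ℝ)).symm (v + w)
        = (WithLp.equiv 2 (Fin d → ℝ)).symm v + (WithLp.equiv 2 (Fin d → ℝ)).symm w :=
    fun v w => rfl
  let e : (Fin d → ℝ) → EuclideanSpace ℝ (Fin d) :=
    fun v => (WithLp.equiv 2 (Fin d → ℝ)).symm v
  let T : Matrix (Fin d) (Fin d) ℝ →
      (EuclideanSpace ℝ (Fin d) →L[ℝ] EuclideanSpace ℝ (Fin d)) :=
    fun M => Matrix.toEuclideanCLM (𝕜 := ℝ) M
  have hTapp : ∀ (M : Matrix (Fin d) (Fin d) ℝ) (v : Fin d → ℝ), T M (e v) = e (M.mulVec v) := by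
    intro M v
    show Matrix.toEuclideanCLM (𝕜 := ℝ) M ((WithLp.equiv 2 (Fin d → ℝ)).symm v) = _
    exact Matrix.toEuclideanCLM_toLp M v
  have hTnorm : ∀ M, ‖T M‖ = l2OpNorm M := fun M => rfl
  have hTsub : ∀ M N, T M - T N = T (M - N) := by
    intro M N
    exact (map_sub (Matrix.toEuclideanCLM (𝕜 := ℝ)) M N).symm
  have hTmul : ∀ M N, T M * T N = T (M * N) := by
    intro M N
    exact (_root_.map_mul (Matrix.toEuclideanCLM (𝕜 := ℝ)) M N).symm
  set B := T (A (x + δ)) with hB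
  set C := T (A x) with hC
  set D := T (A (x + (A x).mulVec δ)) with hD
  have hBB : ∀ v, B (B v) = B v := by
    intro v
    calc B (B v) = (B * B) v := rfl
      _ = T (A (x + δ) * A (x + δ)) v := by rw [hB, hTmul]
      _ = B v := by rw [hidem]
  have hCC : ∀ v, C (C v) = C v := by
    intro v
    calc C (C v) = (C * C) v := rfl
      _ = T (A x * A x) v := by rw [hC, hTmul]
      _ = C v := by rw [hidem]
  have hBnorm : ‖B‖ ≤ 1 := hnorm (x + δ)
  have hCnorm : ‖C‖ ≤ 1 := hnorm x
  have hδe : l2Norm δ = ‖e δ‖ := rfl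
  have hxe : l2Norm x = ‖e x‖ := rfl
  have hδpos : 0 < ‖e δ‖ := by
    refine norm_pos_iff.mpr ?_
    exact fun hc => hδ0 ((WithLp.equiv 2 (Fin d → ℝ)).symm.injective (by simpa [e] using hc))
  have hρnn : 0 ≤ ρ := by
    have h0 := hlip (x + δ) x
    have h1 : l2Norm (x + δ - x) = l2Norm δ := by congr 1; abel
    rw [h1, hδe] at h0
    have h2 : (0:ℝ) ≤ l2OpNorm (A (x + δ) - A x) := by
      unfold l2OpNorm; exact norm_nonneg _
    nlinarith
  have hBC : ‖B - C‖ ≤ ρ * ‖e δ‖ := by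
    have h0 := hlip (x + δ) x
    have h1 : l2Norm (x + δ - x) = l2Norm δ := by congr 1; abel
    rw [h1, hδe] at h0
    calc ‖B - C‖ = l2OpNorm (A (x + δ) - A x) := by rw [hB, hC, hTsub, hTnorm]
      _ ≤ ρ * ‖e δ‖ := h0
  have hkey : ‖e δ - C (e δ)‖ ≤ ‖e δ‖ :=
    norm_sub_apply_le_of_idempotent C hCC hCnorm (e δ)
  have hBD : ‖B - D‖ ≤ ρ * ‖e δ‖ := by
    have h0 := hlip (x + δ) (x + (A x).mulVec δ)
    have h3 : l2Norm (x + δ - (x + (A x).mulVec δ)) = ‖e δ - C (e δ)‖ := by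
      have harg : x + δ - (x + (A x).mulVec δ) = δ - (A x).mulVec δ := by abel
      rw [harg]
      show ‖e (δ - (A x).mulVec δ)‖ = _
      show ‖e δ - e ((A x).mulVec δ)‖ = _
      rw [← hTapp]
    rw [h3] at h0
    calc ‖B - D‖ = l2OpNorm (A (x + δ) - A (x + (A x).mulVec δ)) := by
          rw [hB, hD, hTsub, hTnorm]
      _ ≤ ρ * ‖e δ - C (e δ)‖ := h0
      _ ≤ ρ * ‖e δ‖ := mul_le_mul_of_nonneg_left hkey hρnn
  have hgoal : l2Norm (h (x + δ) - h (x + (A x).mulVec δ))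
      = ‖B (e x + e δ) - D (e x + C (e δ))‖ := by
    show ‖e (h (x + δ) - h (x + (A x).mulVec δ))‖ = _
    rw [show e (h (x + δ) - h (x + (A x).mulVec δ))
        = e (h (x + δ)) - e (h (x + (A x).mulVec δ)) from rfl]
    rw [hh, hh, ← hTapp, ← hTapp]
    rw [show e (x + δ) = e x + e δ from rfl,
      show e (x + (A x).mulVec δ) = e x + e ((A x).mulVec δ) from rfl, ← hTapp]
  rw [hgoal, hδe, hxe]
  have hdecomp : B (e x + e δ) - D (e x + C (e δ))
      = B ((B - C) (e δ)) + (B - D) (e x + C (e δ)) := by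
    have h1 : B (e x + e δ) = B (e x) + B (e δ) := map_add B _ _
    have h2 : B ((B - C) (e δ)) = B (B (e δ)) - B (C (e δ)) := by
      rw [ContinuousLinearMap.sub_apply, map_sub]
    have h3 : (B - D) (e x + C (e δ))
        = B (e x) + B (C (e δ)) - D (e x + C (e δ)) := by
      rw [ContinuousLinearMap.sub_apply, map_add]
    rw [h1, h2, h3, hBB]
    abel
  rw [hdecomp]
  have t1 : ‖B ((B - C) (e δ))‖ ≤ ρ * ‖e δ‖ ^ 2 := by
    calc ‖B ((B - C) (e δ))‖ ≤ ‖B‖ * ‖(B - C) (e δ)‖ := B.le_opNorm _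
      _ ≤ 1 * (‖B - C‖ * ‖e δ‖) :=
          mul_le_mul hBnorm ((B - C).le_opNorm _) (norm_nonneg _) zero_le_one
      _ ≤ 1 * (ρ * ‖e δ‖ * ‖e δ‖) := by
          have := mul_le_mul_of_nonneg_right hBC (norm_nonneg (e δ))
          linarith
      _ = ρ * ‖e δ‖ ^ 2 := by ring
  have t2 : ‖(B - D) (e x + C (e δ))‖ ≤ ρ * ‖e δ‖ * (‖e x‖ + ‖e δ‖) := by
    calc ‖(B - D) (e x + C (e δ))‖ ≤ ‖B - D‖ * ‖e x + C (e δ)‖ := (B - D).le_opNorm _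
      _ ≤ ρ * ‖e δ‖ * (‖e x‖ + ‖e δ‖) := by
          refine mul_le_mul hBD ?_ (norm_nonneg _) (by positivity)
          calc ‖e x + C (e δ)‖ ≤ ‖e x‖ + ‖C (e δ)‖ := norm_add_le _ _
            _ ≤ ‖e x‖ + ‖e δ‖ := by
                have := C.le_opNorm (e δ)
                nlinarith [norm_nonneg (e δ)]
  calc ‖B ((B - C) (e δ)) + (B - D) (e x + C (e δ))‖
      ≤ ‖B ((B - C) (e δ))‖ + ‖(B - D) (e x + C (e δ))‖ := norm_add_le _ _
    _ ≤ ρ * ‖e δ‖ ^ 2 + ρ * ‖e δ‖ * (‖e x‖ + ‖e δ‖) := add_le_add t1 t2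
    _ = 2 * ρ * ‖e δ‖ ^ 2 + ρ * ‖e δ‖ * ‖e x‖ := by ring
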